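/- arXiv:2003.06803 — 2 statements merged into one kernel-verified Lean document; each statement's English description precedes it below -/
import Mathlib

section
/- Let G be a finite regular graph with perfect coloring φ and let a, b, c be three distinct colors used by φ such that a is equivalent to b and b is equivalent to c (identifying either pair yields a perfect coloring). If moreover some vertex of color a has a neighbor of color b, then identifying colors a and c also yields a perfect coloring. -/
/-- The infinite path graph on the integers. -/
def pathGraph : SimpleGraph ℤ := SimpleGraph.fromRel (fun u v => v = u + 1)

/-- Number of neighbors of `v` colored `j` under coloring `c`. -/
noncomputable def nbrCount {V I : Type*} (G : SimpleGraph V) (c : V → I) (v : V) (j : I) : ℕ :=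
  {u | G.Adj v u ∧ c u = j}.ncard

/-- A coloring is perfect if the number of neighbors of each color depends only
on the color of the vertex. -/
def IsPerfectColoring {V I : Type*} (G : SimpleGraph V) (c : V → I) : Prop :=
  ∀ v w, c v = c w → ∀ j, nbrCount G c v j = nbrCount G c w j

/-- Lexicographic product of two simple graphs. -/
def lexProd {V W : Type*} (G : SimpleGraph V) (H : SimpleGraph W) : SimpleGraph (V × W) :=
  SimpleGraph.fromRel (fun p q => G.Adj p.1 q.1 ∨ (p.1 = q.1 ∧ H.Adj p.2 q.2))

/-!
Write `n i` for the size of color class `i` and `m i j` for the number of neighbors of color `j`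
of a vertex of color `i`. Identifying colors `a` and `c` of a perfect coloring gives a perfect
coloring iff `m a j = m c j` for every `j ∉ {a, c}` and `m a a + m a c = m c a + m c c`.
Chaining these conditions for `a ~ b` and `b ~ c` gives `m a j = m c j` for `j ∉ {a, b, c}`, and
the sum condition for `a ~ c` follows by arithmetic once `m a b = m c b` is known. That last
equality comes from double counting edges between classes, `n i * m i j = n j * m j i`: together
with `m a c = m b c` and `m b a = m c a`, the three instances for `a, b, c` give
`n a * n c * m c b = n a * n c * m a b`.
-/

open Finset

section

variable {V I : Type*} {G : SimpleGraph V} {φ : V → I}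

def mergeColor [DecidableEq I] (φ : V → I) (a c : I) : V → I :=
  fun v => if φ v = c then a else φ v

section Merge

variable [DecidableEq I] {a c : I}

lemma nbrCount_mergeColor_right (hac : a ≠ c) (v : V) :
    nbrCount G (mergeColor φ a c) v c = 0 := by
  have : {u | G.Adj v u ∧ mergeColor φ a c u = c} = ∅ := by
    ext u
    simp only [mergeColor, Set.mem_ofPred_eq, Set.mem_empty_iff_false, iff_false, not_and]
    intro _
    split_ifs with h
    exacts [hac, h]
  rw [nbrCount, this, Set.ncard_empty]

lemma nbrCount_mergeColor_of_ne {j : I} (hja : j ≠ a) (hjc : j ≠ c) (v : V) :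
    nbrCount G (mergeColor φ a c) v j = nbrCount G φ v j := by
  unfold nbrCount
  congr with u
  simp only [mergeColor]
  split_ifs with h
  · simp [h, hja.symm, hjc.symm]
  · rfl

lemma nbrCount_mergeColor_left [Finite V] (hac : a ≠ c) (v : V) :
    nbrCount G (mergeColor φ a c) v a = nbrCount G φ v a + nbrCount G φ v c := by
  have hsplit : {u | G.Adj v u ∧ mergeColor φ a c u = a}
      = {u | G.Adj v u ∧ φ u = a} ∪ {u | G.Adj v u ∧ φ u = c} := by
    ext u
    simp only [mergeColor, Set.mem_ofPred_eq, Set.mem_union]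
    split_ifs with h <;> simp [h, hac.symm]
  have hdisj : Disjoint {u | G.Adj v u ∧ φ u = a} {u | G.Adj v u ∧ φ u = c} :=
    Set.disjoint_left.2 fun u ha hc => hac (ha.2.symm.trans hc.2)
  rw [nbrCount, hsplit, Set.ncard_union_eq hdisj]
  rfl

lemma forall_nbrCount_mergeColor_eq_iff [Finite V] (hac : a ≠ c) (v w : V) :
    (∀ j, nbrCount G (mergeColor φ a c) v j = nbrCount G (mergeColor φ a c) w j) ↔
      (∀ j, j ≠ a → j ≠ c → nbrCount G φ v j = nbrCount G φ w j) ∧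
        nbrCount G φ v a + nbrCount G φ v c = nbrCount G φ w a + nbrCount G φ w c := by
  refine ⟨fun h => ⟨fun j hja hjc => ?_, ?_⟩, fun ⟨hne, hsum⟩ j => ?_⟩
  · simpa only [nbrCount_mergeColor_of_ne hja hjc] using h j
  · simpa only [nbrCount_mergeColor_left hac] using h a
  · rcases eq_or_ne j c with rfl | hjc
    · rw [nbrCount_mergeColor_right hac, nbrCount_mergeColor_right hac]
    rcases eq_or_ne j a with rfl | hja
    · rwa [nbrCount_mergeColor_left hac, nbrCount_mergeColor_left hac]
    rw [nbrCount_mergeColor_of_ne hja hjc, nbrCount_mergeColor_of_ne hja hjc]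
    exact hne j hja hjc

theorem IsPerfectColoring.mergeColor_iff [Finite V] (hφ : IsPerfectColoring G φ) (hac : a ≠ c)
    {va vc : V} (hva : φ va = a) (hvc : φ vc = c) :
    IsPerfectColoring G (mergeColor φ a c) ↔
      (∀ j, j ≠ a → j ≠ c → nbrCount G φ va j = nbrCount G φ vc j) ∧
        nbrCount G φ va a + nbrCount G φ va c = nbrCount G φ vc a + nbrCount G φ vc c := by
  rw [← forall_nbrCount_mergeColor_eq_iff hac]
  refine ⟨fun h => h va vc (by simp [mergeColor, hva, hvc, hac]), fun h v w hvw => ?_⟩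
  have hsame : ∀ {x y}, φ x = φ y → ∀ j,
      nbrCount G (mergeColor φ a c) x j = nbrCount G (mergeColor φ a c) y j :=
    fun hxy => (forall_nbrCount_mergeColor_eq_iff hac _ _).2
      ⟨fun j _ _ => hφ _ _ hxy j, by rw [hφ _ _ hxy a, hφ _ _ hxy c]⟩
  by_cases hv : φ v = c <;> by_cases hw : φ w = c <;>
    simp only [mergeColor, hv, hw, if_true, if_false] at hvw
  · exact hsame (hv.trans hw.symm)
  · exact fun j => (hsame (hv.trans hvc.symm) j).trans <|
      (h j).symm.trans (hsame (hva.trans hvw) j)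
  · exact fun j => (hsame (hvw.trans hva.symm) j).trans <|
      (h j).trans (hsame (hvc.trans hw.symm) j)
  · exact hsame hvw

end Merge

section Counting

variable [Fintype V] [DecidableEq I]

lemma nbrCount_eq_card_bipartiteAbove [DecidableRel G.Adj] (v : V) (j : I) :
    nbrCount G φ v j = #((univ.filter (φ · = j)).bipartiteAbove G.Adj v) := by
  rw [nbrCount, bipartiteAbove, ← Set.ncard_coe_finset]
  congr 1
  ext u
  simp [and_comm]

lemma IsPerfectColoring.ncard_mul_nbrCount_eq_sum (hφ : IsPerfectColoring G φ) {i : I} {v : V}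
    (hv : φ v = i) (j : I) :
    {u | φ u = i}.ncard * nbrCount G φ v j =
      ∑ w ∈ univ.filter (φ · = i), nbrCount G φ w j := by
  rw [sum_congr rfl fun w hw => hφ w v ((mem_filter.1 hw).2.trans hv.symm) j, sum_const,
    smul_eq_mul, ← Set.ncard_coe_finset, coe_filter_univ]

end Counting

lemma IsPerfectColoring.ncard_mul_nbrCount_comm [Finite V] (hφ : IsPerfectColoring G φ)
    {i j : I} {v w : V} (hv : φ v = i) (hw : φ w = j) :
    {u | φ u = i}.ncard * nbrCount G φ v j = {u | φ u = j}.ncard * nbrCount G φ w i := by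
  classical
  have := Fintype.ofFinite V
  rw [hφ.ncard_mul_nbrCount_eq_sum hv, hφ.ncard_mul_nbrCount_eq_sum hw]
  simp only [nbrCount_eq_card_bipartiteAbove]
  rw [sum_card_bipartiteAbove_eq_sum_card_bipartiteBelow]
  refine sum_congr rfl fun x _ => ?_
  simp only [bipartiteBelow, bipartiteAbove, G.adj_comm]

lemma IsPerfectColoring.nbrCount_eq_of_three_classes [Finite V] (hφ : IsPerfectColoring G φ)
    {a b c : I} {va vb vc : V} (hva : φ va = a) (hvb : φ vb = b) (hvc : φ vc = c)
    (hmc : nbrCount G φ va c = nbrCount G φ vb c)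
    (hma : nbrCount G φ vb a = nbrCount G φ vc a) :
    nbrCount G φ vc b = nbrCount G φ va b := by
  set na := {u | φ u = a}.ncard
  set nb := {u | φ u = b}.ncard
  set nc := {u | φ u = c}.ncard
  have hpos : 0 < na * nc :=
    Nat.mul_pos ((Set.ncard_pos).2 ⟨va, hva⟩) ((Set.ncard_pos).2 ⟨vc, hvc⟩)
  have hab := hφ.ncard_mul_nbrCount_comm hva hvb
  have hbc := hφ.ncard_mul_nbrCount_comm hvb hvc
  have hac := hφ.ncard_mul_nbrCount_comm hva hvc
  rw [hmc] at hac
  rw [hma] at hab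
  refine Nat.eq_of_mul_eq_mul_left hpos ?_
  linear_combination na * hbc.symm + nb * hac + nc * hab.symm

end

theorem colorEquiv_trans_general {V I : Type*} [Fintype V] [DecidableEq I]
    (G : SimpleGraph V)
    (φ : V → I) (hφ : IsPerfectColoring G φ)
    (a b c : I) (hab : a ≠ b) (hbc : b ≠ c) (hac : a ≠ c)
    (ha : ∃ v, φ v = a) (hb : ∃ v, φ v = b) (hc : ∃ v, φ v = c)
    (heqab : IsPerfectColoring G (fun v => if φ v = b then a else φ v))
    (heqbc : IsPerfectColoring G (fun v => if φ v = c then b else φ v)) :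
    IsPerfectColoring G (fun v => if φ v = c then a else φ v) := by
  obtain ⟨va, hva⟩ := ha
  obtain ⟨vb, hvb⟩ := hb
  obtain ⟨vc, hvc⟩ := hc
  obtain ⟨hab_ne, hab_sum⟩ := (hφ.mergeColor_iff hab hva hvb).1 heqab
  obtain ⟨hbc_ne, hbc_sum⟩ := (hφ.mergeColor_iff hbc hvb hvc).1 heqbc
  have hmc := hab_ne c hac.symm hbc.symm
  have hma := hbc_ne a hab hac
  have hmb := hφ.nbrCount_eq_of_three_classes hva hvb hvc hmc hma
  refine (hφ.mergeColor_iff hac hva hvc).2 ⟨fun j hja hjc => ?_, by omega⟩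
  rcases eq_or_ne j b with rfl | hjb
  · exact hmb.symm
  · exact (hab_ne j hja hjb).trans (hbc_ne j hjb hjc)

/-- Transitivity of color equivalence on a finite regular graph, given that
colors `a` and `b` actually occur on adjacent vertices. -/
theorem colorEquiv_trans {V I : Type*} [Fintype V] [DecidableEq I]
    (G : SimpleGraph V) (d : ℕ) (hreg : ∀ v, (G.neighborSet v).ncard = d)
    (φ : V → I) (hφ : IsPerfectColoring G φ)
    (a b c : I) (hab : a ≠ b) (hbc : b ≠ c) (hac : a ≠ c)
    (ha : ∃ v, φ v = a) (hb : ∃ v, φ v = b) (hc : ∃ v, φ v = c)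
    (heqab : IsPerfectColoring G (fun v => if φ v = b then a else φ v))
    (heqbc : IsPerfectColoring G (fun v => if φ v = c then b else φ v))
    (hadj : ∃ v u, φ v = a ∧ G.Adj v u ∧ φ u = b) :
    IsPerfectColoring G (fun v => if φ v = c then a else φ v) :=
  colorEquiv_trans_general G φ hφ a b c hab hbc hac ha hb hc heqab heqbc
end

section
/- For every k ≥ 2, the coloring c : ℤ → {0,1,…,k−1} defined by c(n) = |((n mod (2k−2)) − (k−1))| (reflecting n into {0,…,k−1}) is a perfect coloring of the infinite path graph (the mirror coloring of type (1,1) with period [k−1 k−2 … 1 0 1 … k−2]). -/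
/-!
On the path graph a vertex has exactly the two neighbours `n - 1` and `n + 1`, so a colouring is
perfect as soon as the multiset `{c (n - 1), c (n + 1)}` is a function of `c n`. For the mirror
colouring, writing `r = n % (2k - 2)`, the neighbours have residues `r ± 1` (wrapping around at
`0` and `2k - 3`), so colour `a` sees the colours `a - 1` and `a + 1` reflected at the ends `0`
and `k - 1` of the palette, namely `|a - 1|` and `k - 1 - |k - 2 - a|`.
-/

theorem Int.add_one_emod_eq_ite (n : ℤ) {m : ℤ} (hm : 0 < m) :
    (n + 1) % m = if n % m = m - 1 then 0 else n % m + 1 := by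
  have h0 := Int.emod_nonneg n hm.ne'
  have h1 := Int.emod_lt_of_pos n hm
  rw [← Int.emod_add_emod]
  split_ifs with h
  · rw [h, sub_add_cancel, Int.emod_self]
  · exact Int.emod_eq_of_lt (by omega) (by omega)

theorem Int.sub_one_emod_eq_ite (n : ℤ) {m : ℤ} (hm : 0 < m) :
    (n - 1) % m = if n % m = 0 then m - 1 else n % m - 1 := by
  have h := Int.add_one_emod_eq_ite (n - 1) hm
  have h0 := Int.emod_nonneg (n - 1) hm.ne'
  rw [sub_add_cancel] at h
  split_ifs at h ⊢ <;> omega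

theorem Multiset.pair_eq_pair_of_or {α : Type*} {a b c d : α}
    (h : a = c ∧ b = d ∨ a = d ∧ b = c) : ({a, b} : Multiset α) = {c, d} := by
  rcases h with ⟨rfl, rfl⟩ | ⟨rfl, rfl⟩
  · rfl
  · exact Multiset.pair_comm _ _

lemma pathGraph_adj {u v : ℤ} : pathGraph.Adj u v ↔ v = u - 1 ∨ v = u + 1 := by
  simp only [pathGraph, SimpleGraph.fromRel_adj]
  omega

lemma nbrCount_pathGraph {I : Type*} [DecidableEq I] (c : ℤ → I) (v : ℤ) (j : I) :
    nbrCount pathGraph c v j = Multiset.count j {c (v - 1), c (v + 1)} := by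
  have hnbrs : {u | pathGraph.Adj v u ∧ c u = j} =
      ↑(({v - 1, v + 1} : Finset ℤ).filter (c · = j)) := by
    ext u
    simp [pathGraph_adj]
  rw [nbrCount, hnbrs, Set.ncard_coe_finset, Finset.card_filter, Finset.sum_pair (by omega),
    Multiset.insert_eq_cons, Multiset.count_cons, Multiset.count_singleton]
  simp only [eq_comm, add_comm]

lemma isPerfectColoring_pathGraph_of_neighbors {I : Type*} (c : ℤ → I) (f : I → Multiset I)
    (hf : ∀ n, ({c (n - 1), c (n + 1)} : Multiset I) = f (c n)) :
    IsPerfectColoring pathGraph c := by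
  classical
  intro v w hvw j
  rw [nbrCount_pathGraph, nbrCount_pathGraph, hf, hf, hvw]

def mirrorColoring (k n : ℤ) : ℤ := |n % (2 * k - 2) - (k - 1)|

lemma mirrorColoring_neighbors (k : ℤ) (hk : 2 ≤ k) (n : ℤ) :
    ({mirrorColoring k (n - 1), mirrorColoring k (n + 1)} : Multiset ℤ) =
      {|mirrorColoring k n - 1|, k - 1 - |k - 2 - mirrorColoring k n|} := by
  have hm : 0 < 2 * k - 2 := by omega
  have h0 := Int.emod_nonneg n hm.ne'
  have h1 := Int.emod_lt_of_pos n hm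
  apply Multiset.pair_eq_pair_of_or
  simp only [mirrorColoring, Int.sub_one_emod_eq_ite n hm, Int.add_one_emod_eq_ite n hm,
    Int.abs_eq_natAbs]
  split_ifs <;> omega

/-- The mirror coloring of type (1,1) is a perfect coloring of the infinite path graph. -/
theorem mirror11_coloring_isPerfect (k : ℤ) (hk : 2 ≤ k) :
    IsPerfectColoring pathGraph (fun n : ℤ => |n % (2 * k - 2) - (k - 1)|) :=
  isPerfectColoring_pathGraph_of_neighbors (mirrorColoring k)
    (fun a => {|a - 1|, k - 1 - |k - 2 - a|}) (mirrorColoring_neighbors k hk)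
end
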